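/- arXiv:2508.16118 — 5 statements merged into one kernel-verified Lean document; each statement's English description precedes it below -/
import Mathlib

section
/- Let a₁, a₂, b₁, b₂ be complex numbers with a₁ ≠ a₂ and b₁ ≠ b₂, let w ∈ ℂ and ρ > 0, and suppose that all four sums aᵢ + bⱼ (i, j ∈ {1,2}) lie on the circle {z ∈ ℂ : |z − w| = ρ}. Then a₁ − a₂ is not a real scalar multiple of b₁ − b₂; that is, there is no λ ∈ ℝ with a₁ − a₂ = λ·(b₁ − b₂). (Lemma 2.2(1): the lines through {a₁,a₂} and {b₁,b₂} are not parallel.) -/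
/-- Lemma 2.2(1): if all four sums `aᵢ + bⱼ` lie on a circle of positive radius,
then the lines through `{a₁, a₂}` and `{b₁, b₂}` are not parallel, i.e.
`a₁ - a₂` is not a real scalar multiple of `b₁ - b₂`. -/
theorem stmt_0 (a₁ a₂ b₁ b₂ w : ℂ) (ρ : ℝ) (hρ : 0 < ρ)
    (ha : a₁ ≠ a₂) (hb : b₁ ≠ b₂)
    (h11 : ‖a₁ + b₁ - w‖ = ρ)
    (h12 : ‖a₁ + b₂ - w‖ = ρ)
    (h21 : ‖a₂ + b₁ - w‖ = ρ)
    (h22 : ‖a₂ + b₂ - w‖ = ρ) :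
    ¬ ∃ l : ℝ, a₁ - a₂ = (l : ℂ) * (b₁ - b₂) := by
  rintro ⟨l, hl⟩
  have ha1 : a₁ = a₂ + (l : ℂ) * (b₁ - b₂) := by linear_combination hl
  subst ha1
  have e11 : Complex.normSq (a₂ + (l : ℂ) * (b₁ - b₂) + b₁ - w) = ρ ^ 2 := by
    rw [← Complex.sq_norm, h11]
  have e12 : Complex.normSq (a₂ + (l : ℂ) * (b₁ - b₂) + b₂ - w) = ρ ^ 2 := by
    rw [← Complex.sq_norm, h12]
  have e21 : Complex.normSq (a₂ + b₁ - w) = ρ ^ 2 := by rw [← Complex.sq_norm, h21]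
  have e22 : Complex.normSq (a₂ + b₂ - w) = ρ ^ 2 := by rw [← Complex.sq_norm, h22]
  have hd : Complex.normSq (b₁ - b₂) ≠ 0 := by
    simpa [Complex.normSq_eq_zero, sub_eq_zero] using hb
  have hl0 : l = 0 := by
    have key : 2 * l * Complex.normSq (b₁ - b₂) = 0 := by
      simp only [Complex.normSq_apply, Complex.add_re, Complex.add_im, Complex.sub_re,
        Complex.sub_im, Complex.mul_re, Complex.mul_im, Complex.ofReal_re,
        Complex.ofReal_im] at e11 e12 e21 e22 ⊢
      linear_combination e11 - e21 - e12 + e22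
    rcases mul_eq_zero.mp key with h | h
    · rcases mul_eq_zero.mp h with h | h
      · norm_num at h
      · exact h
    · exact absurd h hd
  apply ha
  simp [hl0]
end

section
/- Let a₁, a₂, b₁, b₂ be complex numbers with a₁ ≠ a₂ and b₁ ≠ b₂, let w ∈ ℂ and ρ > 0, and suppose that all four sums aᵢ + bⱼ (i, j ∈ {1,2}) lie on the circle {z ∈ ℂ : |z − w| = ρ}. Then (a₁ + a₂)/2 + (b₁ + b₂)/2 = w. (Lemma 2.2(2): the sum of the averages of the two sets is the centre of the circle.) -/
/-- Lemma 2.2(2): if all four sums `aᵢ + bⱼ` lie on a circle of positive radius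
with centre `w`, then the sum of the averages of `{a₁, a₂}` and `{b₁, b₂}`
is the centre `w`. -/
theorem stmt_1 (a₁ a₂ b₁ b₂ w : ℂ) (ρ : ℝ) (hρ : 0 < ρ)
    (ha : a₁ ≠ a₂) (hb : b₁ ≠ b₂)
    (h11 : ‖a₁ + b₁ - w‖ = ρ)
    (h12 : ‖a₁ + b₂ - w‖ = ρ)
    (h21 : ‖a₂ + b₁ - w‖ = ρ)
    (h22 : ‖a₂ + b₂ - w‖ = ρ) :
    (a₁ + a₂) / 2 + (b₁ + b₂) / 2 = w := by
  have sq' : ∀ z : ℂ, ‖z‖ = ρ →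
      (z.re)^2 + (z.im)^2 = ρ^2 := by
    intro z hz
    have h2 : ‖z‖ ^ 2 = ρ ^ 2 := by rw [hz]
    rw [Complex.sq_norm, Complex.normSq_apply] at h2
    nlinarith [h2]
  have e11 := sq' _ h11
  have e12 := sq' _ h12
  have e21 := sq' _ h21
  have e22 := sq' _ h22
  simp only [Complex.sub_re, Complex.add_re, Complex.sub_im, Complex.add_im] at e11 e12 e21 e22
  have hα : (a₁.re - a₂.re)^2 + (a₁.im - a₂.im)^2 > 0 := by
    have h := Complex.normSq_pos.mpr (sub_ne_zero.mpr ha)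
    simpa [Complex.normSq_apply, Complex.sub_re, Complex.sub_im, sq] using h
  have hβ : (b₁.re - b₂.re)^2 + (b₁.im - b₂.im)^2 > 0 := by
    have h := Complex.normSq_pos.mpr (sub_ne_zero.mpr hb)
    simpa [Complex.normSq_apply, Complex.sub_re, Complex.sub_im, sq] using h
  -- abbreviations as real numbers
  set αr := a₁.re - a₂.re with hαr
  set αi := a₁.im - a₂.im with hαi
  set βr := b₁.re - b₂.re with hβr
  set βi := b₁.im - b₂.im with hβi
  set Sr := a₁.re + a₂.re + b₁.re + b₂.re - 2*w.re with hSr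
  set Si := a₁.im + a₂.im + b₁.im + b₂.im - 2*w.im with hSi
  have A : Sr*αr + Si*αi = 0 := by
    rw [hSr, hαr, hSi, hαi]; linear_combination (e11 + e12 - e21 - e22)/2
  have B : Sr*βr + Si*βi = 0 := by
    rw [hSr, hβr, hSi, hβi]; linear_combination (e11 - e12 + e21 - e22)/2
  have C : αr*βr + αi*βi = 0 := by
    rw [hαr, hβr, hαi, hβi]; linear_combination (e11 - e12 - e21 + e22)/2
  have hd2 : (αr*βi - αi*βr)^2 = (αr^2 + αi^2) * (βr^2 + βi^2) := by
    linear_combination (-(αr*βr) - αi*βi) * C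
  have hd : αr*βi - αi*βr ≠ 0 := by
    intro h
    rw [h] at hd2
    nlinarith [hα, hβ]
  have hSr0 : Sr = 0 := by
    have : Sr * (αr*βi - αi*βr) = 0 := by linear_combination βi * A - αi * B
    rcases mul_eq_zero.mp this with h | h
    · exact h
    · exact absurd h hd
  have hSi0 : Si = 0 := by
    have : Si * (αr*βi - αi*βr) = 0 := by linear_combination αr * B - βr * A
    rcases mul_eq_zero.mp this with h | h
    · exact h
    · exact absurd h hd
  rw [hSr] at hSr0
  rw [hSi] at hSi0
  have hS : a₁ + a₂ + b₁ + b₂ = 2*w := by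
    apply Complex.ext <;> simp [Complex.add_re, Complex.add_im, Complex.mul_re, Complex.mul_im] <;> linarith
  linear_combination hS / 2
end

section
/- Let n ≥ 2 be an integer and let a, b₁, b₂, c₁, c₂, d₁₁, d₁₂, d₂₁, d₂₂ ∈ ℂ be such that the 3×3 matrix A = [[a, b₁, b₂], [c₁, d₁₁, d₁₂], [c₂, d₂₁, d₂₂]] is invertible. Let α₁, γ₁, α₂, γ₂ ∈ ℂ, and in the polynomial ring ℂ[T, U₁, U₂] set Gᵢ = Uᵢ² − 2αᵢUᵢT + γᵢT² for i = 1, 2. Let R = ℂ[T, U₁, U₂]/(T^{n+1}, G₁, G₂), and let t, u₁, u₂ be the images of T, U₁, U₂ in R. Define x = a·t + b₁·u₁ + b₂·u₂ and yᵢ = cᵢ·t + d_{i1}·u₁ + d_{i2}·u₂ for i = 1, 2. Suppose there exist β₁, δ₁, β₂, δ₂ ∈ ℂ such that in R one has x^{n+1} = 0 and yᵢ² − 2βᵢ·x·yᵢ + δᵢ·x² = 0 for i = 1, 2, and suppose moreover that a + b₁α₁ + b₂α₂ = 0. Then b₁ = 0 or b₂ = 0. -/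
open MvPolynomial

@[ext] structure Q2 (e₁ e₂ : ℂ) where
  w : ℂ
  x : ℂ
  y : ℂ
  z : ℂ

namespace Q2

variable {e₁ e₂ : ℂ}

instance : Zero (Q2 e₁ e₂) := ⟨⟨0,0,0,0⟩⟩
instance : One (Q2 e₁ e₂) := ⟨⟨1,0,0,0⟩⟩
instance : Add (Q2 e₁ e₂) := ⟨fun p q => ⟨p.w+q.w, p.x+q.x, p.y+q.y, p.z+q.z⟩⟩
instance : Neg (Q2 e₁ e₂) := ⟨fun p => ⟨-p.w, -p.x, -p.y, -p.z⟩⟩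
instance : Mul (Q2 e₁ e₂) := ⟨fun p q =>
  ⟨p.w*q.w + e₁*(p.x*q.x) + e₂*(p.y*q.y) + e₁*e₂*(p.z*q.z),
   p.w*q.x + p.x*q.w + e₂*(p.y*q.z + p.z*q.y),
   p.w*q.y + p.y*q.w + e₁*(p.x*q.z + p.z*q.x),
   p.w*q.z + p.z*q.w + p.x*q.y + p.y*q.x⟩⟩
instance : SMul ℂ (Q2 e₁ e₂) := ⟨fun r p => ⟨r*p.w, r*p.x, r*p.y, r*p.z⟩⟩

@[simp] lemma mk_w (aa bb cc dd : ℂ) : (Q2.mk aa bb cc dd : Q2 e₁ e₂).w = aa := rfl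
@[simp] lemma mk_x (aa bb cc dd : ℂ) : (Q2.mk aa bb cc dd : Q2 e₁ e₂).x = bb := rfl
@[simp] lemma mk_y (aa bb cc dd : ℂ) : (Q2.mk aa bb cc dd : Q2 e₁ e₂).y = cc := rfl
@[simp] lemma mk_z (aa bb cc dd : ℂ) : (Q2.mk aa bb cc dd : Q2 e₁ e₂).z = dd := rfl
@[simp] lemma zero_w : (0 : Q2 e₁ e₂).w = 0 := rfl
@[simp] lemma zero_x : (0 : Q2 e₁ e₂).x = 0 := rfl
@[simp] lemma zero_y : (0 : Q2 e₁ e₂).y = 0 := rfl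
@[simp] lemma zero_z : (0 : Q2 e₁ e₂).z = 0 := rfl
@[simp] lemma one_w : (1 : Q2 e₁ e₂).w = 1 := rfl
@[simp] lemma one_x : (1 : Q2 e₁ e₂).x = 0 := rfl
@[simp] lemma one_y : (1 : Q2 e₁ e₂).y = 0 := rfl
@[simp] lemma one_z : (1 : Q2 e₁ e₂).z = 0 := rfl
@[simp] lemma add_w (p q : Q2 e₁ e₂) : (p+q).w = p.w+q.w := rfl
@[simp] lemma add_x (p q : Q2 e₁ e₂) : (p+q).x = p.x+q.x := rfl
@[simp] lemma add_y (p q : Q2 e₁ e₂) : (p+q).y = p.y+q.y := rfl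
@[simp] lemma add_z (p q : Q2 e₁ e₂) : (p+q).z = p.z+q.z := rfl
@[simp] lemma neg_w (p : Q2 e₁ e₂) : (-p).w = -p.w := rfl
@[simp] lemma neg_x (p : Q2 e₁ e₂) : (-p).x = -p.x := rfl
@[simp] lemma neg_y (p : Q2 e₁ e₂) : (-p).y = -p.y := rfl
@[simp] lemma neg_z (p : Q2 e₁ e₂) : (-p).z = -p.z := rfl
@[simp] lemma mul_w (p q : Q2 e₁ e₂) :
    (p*q).w = p.w*q.w + e₁*(p.x*q.x) + e₂*(p.y*q.y) + e₁*e₂*(p.z*q.z) := rfl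
@[simp] lemma mul_x (p q : Q2 e₁ e₂) :
    (p*q).x = p.w*q.x + p.x*q.w + e₂*(p.y*q.z + p.z*q.y) := rfl
@[simp] lemma mul_y (p q : Q2 e₁ e₂) :
    (p*q).y = p.w*q.y + p.y*q.w + e₁*(p.x*q.z + p.z*q.x) := rfl
@[simp] lemma mul_z (p q : Q2 e₁ e₂) :
    (p*q).z = p.w*q.z + p.z*q.w + p.x*q.y + p.y*q.x := rfl
@[simp] lemma smul_w (r : ℂ) (p : Q2 e₁ e₂) : (r • p).w = r*p.w := rfl
@[simp] lemma smul_x (r : ℂ) (p : Q2 e₁ e₂) : (r • p).x = r*p.x := rfl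
@[simp] lemma smul_y (r : ℂ) (p : Q2 e₁ e₂) : (r • p).y = r*p.y := rfl
@[simp] lemma smul_z (r : ℂ) (p : Q2 e₁ e₂) : (r • p).z = r*p.z := rfl

instance : CommRing (Q2 e₁ e₂) where
  add_assoc p q r := by ext <;> simp <;> ring
  zero_add p := by ext <;> simp
  add_zero p := by ext <;> simp
  add_comm p q := by ext <;> simp <;> ring
  neg_add_cancel p := by ext <;> simp
  mul_assoc p q r := by ext <;> simp <;> ring
  one_mul p := by ext <;> simp
  mul_one p := by ext <;> simp
  left_distrib p q r := by ext <;> simp <;> ring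
  right_distrib p q r := by ext <;> simp <;> ring
  zero_mul p := by ext <;> simp
  mul_zero p := by ext <;> simp
  mul_comm p q := by ext <;> simp <;> ring
  nsmul := fun n p => (n : ℂ) • p
  nsmul_zero p := by show ((0:ℕ):ℂ) • p = 0; ext <;> simp
  nsmul_succ n p := by show ((n+1:ℕ):ℂ) • p = (n:ℂ) • p + p; ext <;> simp <;> ring
  zsmul := fun n p => (n : ℂ) • p
  zsmul_zero' p := by show ((0:ℤ):ℂ) • p = 0; ext <;> simp
  zsmul_succ' n p := by
    show (((n.succ:ℕ):ℤ):ℂ) • p = (((n:ℕ):ℤ):ℂ) • p + p; ext <;> push_cast <;> simp <;> ring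
  zsmul_neg' n p := by
    show ((Int.negSucc n : ℤ):ℂ) • p = -((((n.succ:ℕ):ℤ):ℂ) • p)
    ext <;> push_cast <;> simp [Int.cast_negSucc] <;> ring

instance : Algebra ℂ (Q2 e₁ e₂) where
  algebraMap := {
  toFun := fun r => ⟨r,0,0,0⟩
  map_one' := rfl
  map_mul' := fun r s => by ext <;> simp
  map_zero' := rfl
  map_add' := fun r s => by ext <;> simp }
  commutes' r p := by ext <;> simp <;> ring
  smul_def' r p := by ext <;> simp

@[simp] lemma algebraMap_w (r : ℂ) : (algebraMap ℂ (Q2 e₁ e₂) r).w = r := rfl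
@[simp] lemma algebraMap_x (r : ℂ) : (algebraMap ℂ (Q2 e₁ e₂) r).x = 0 := rfl
@[simp] lemma algebraMap_y (r : ℂ) : (algebraMap ℂ (Q2 e₁ e₂) r).y = 0 := rfl
@[simp] lemma algebraMap_z (r : ℂ) : (algebraMap ℂ (Q2 e₁ e₂) r).z = 0 := rfl

@[simp] lemma sub_w (p q : Q2 e₁ e₂) : (p-q).w = p.w-q.w := by
  rw [sub_eq_add_neg, add_w, neg_w]; ring
@[simp] lemma sub_x (p q : Q2 e₁ e₂) : (p-q).x = p.x-q.x := by
  rw [sub_eq_add_neg, add_x, neg_x]; ring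
@[simp] lemma sub_y (p q : Q2 e₁ e₂) : (p-q).y = p.y-q.y := by
  rw [sub_eq_add_neg, add_y, neg_y]; ring
@[simp] lemma sub_z (p q : Q2 e₁ e₂) : (p-q).z = p.z-q.z := by
  rw [sub_eq_add_neg, add_z, neg_z]; ring

end Q2

/-- The specialization `T ↦ X`, `U₁ ↦ (α₁+η₁)X`, `U₂ ↦ (α₂+η₂)X`. -/
noncomputable def psiQ2 (α₁ γ₁ α₂ γ₂ : ℂ) :
    MvPolynomial (Fin 3) ℂ →ₐ[ℂ] Polynomial (Q2 (α₁^2-γ₁) (α₂^2-γ₂)) :=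
  aeval ![Polynomial.X, Polynomial.C ⟨α₁,1,0,0⟩ * Polynomial.X,
    Polynomial.C ⟨α₂,0,1,0⟩ * Polynomial.X]

variable {α₁ γ₁ α₂ γ₂ : ℂ}

lemma psiQ2_X0 : psiQ2 α₁ γ₁ α₂ γ₂ (X 0) = Polynomial.X := by
  simp [psiQ2]

lemma psiQ2_X1 : psiQ2 α₁ γ₁ α₂ γ₂ (X 1) = Polynomial.C ⟨α₁,1,0,0⟩ * Polynomial.X := by
  simp [psiQ2]

lemma psiQ2_X2 : psiQ2 α₁ γ₁ α₂ γ₂ (X 2) = Polynomial.C ⟨α₂,0,1,0⟩ * Polynomial.X := by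
  simp [psiQ2]

lemma psiQ2_C (r : ℂ) : psiQ2 α₁ γ₁ α₂ γ₂ (C r)
    = Polynomial.C (algebraMap ℂ (Q2 (α₁^2-γ₁) (α₂^2-γ₂)) r) := by
  simp [psiQ2, Polynomial.algebraMap_apply]

lemma psiQ2_G₁ : psiQ2 α₁ γ₁ α₂ γ₂ (X 1 ^ 2 - C (2 * α₁) * X 1 * X 0 + C γ₁ * X 0 ^ 2) = 0 := by
  have hq : (⟨α₁,1,0,0⟩ : Q2 (α₁^2-γ₁) (α₂^2-γ₂)) * ⟨α₁,1,0,0⟩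
      - algebraMap ℂ _ (2*α₁) * ⟨α₁,1,0,0⟩ + algebraMap ℂ _ γ₁ = 0 := by
    ext <;> simp only [Q2.mul_w, Q2.mul_x, Q2.mul_y, Q2.mul_z, Q2.add_w, Q2.add_x, Q2.add_y,
      Q2.add_z, Q2.sub_w, Q2.sub_x, Q2.sub_y, Q2.sub_z, Q2.mk_w, Q2.mk_x, Q2.mk_y, Q2.mk_z,
      Q2.algebraMap_w, Q2.algebraMap_x, Q2.algebraMap_y, Q2.algebraMap_z,
      Q2.zero_w, Q2.zero_x, Q2.zero_y, Q2.zero_z] <;> ring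
  have h : psiQ2 α₁ γ₁ α₂ γ₂ (X 1 ^ 2 - C (2 * α₁) * X 1 * X 0 + C γ₁ * X 0 ^ 2)
      = Polynomial.C ((⟨α₁,1,0,0⟩ : Q2 (α₁^2-γ₁) (α₂^2-γ₂)) * ⟨α₁,1,0,0⟩
        - algebraMap ℂ _ (2*α₁) * ⟨α₁,1,0,0⟩ + algebraMap ℂ _ γ₁) * Polynomial.X ^ 2 := by
    simp only [map_add, map_sub, map_mul, map_pow, psiQ2_X0, psiQ2_X1, psiQ2_C]
    ring
  rw [h, hq]
  simp

lemma psiQ2_G₂ : psiQ2 α₁ γ₁ α₂ γ₂ (X 2 ^ 2 - C (2 * α₂) * X 2 * X 0 + C γ₂ * X 0 ^ 2) = 0 := by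
  have hq : (⟨α₂,0,1,0⟩ : Q2 (α₁^2-γ₁) (α₂^2-γ₂)) * ⟨α₂,0,1,0⟩
      - algebraMap ℂ _ (2*α₂) * ⟨α₂,0,1,0⟩ + algebraMap ℂ _ γ₂ = 0 := by
    ext <;> simp only [Q2.mul_w, Q2.mul_x, Q2.mul_y, Q2.mul_z, Q2.add_w, Q2.add_x, Q2.add_y,
      Q2.add_z, Q2.sub_w, Q2.sub_x, Q2.sub_y, Q2.sub_z, Q2.mk_w, Q2.mk_x, Q2.mk_y, Q2.mk_z,
      Q2.algebraMap_w, Q2.algebraMap_x, Q2.algebraMap_y, Q2.algebraMap_z,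
      Q2.zero_w, Q2.zero_x, Q2.zero_y, Q2.zero_z] <;> ring
  have h : psiQ2 α₁ γ₁ α₂ γ₂ (X 2 ^ 2 - C (2 * α₂) * X 2 * X 0 + C γ₂ * X 0 ^ 2)
      = Polynomial.C ((⟨α₂,0,1,0⟩ : Q2 (α₁^2-γ₁) (α₂^2-γ₂)) * ⟨α₂,0,1,0⟩
        - algebraMap ℂ _ (2*α₂) * ⟨α₂,0,1,0⟩ + algebraMap ℂ _ γ₂) * Polynomial.X ^ 2 := by
    simp only [map_add, map_sub, map_mul, map_pow, psiQ2_X0, psiQ2_X2, psiQ2_C]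
    ring
  rw [h, hq]
  simp

lemma cw_eq_zero {B : Type*} [CommRing B] (w : B) (q : Polynomial B)
    (h : Polynomial.C w * Polynomial.X ^ 2 = Polynomial.X ^ 3 * q) : w = 0 := by
  have h2 := congrArg (fun p => Polynomial.coeff p 2) h
  simpa [mul_comm (Polynomial.X ^ 3) q, Polynomial.coeff_mul_X_pow'] using h2

set_option maxHeartbeats 1600000 in
/-- Lemma 2.3: in `R = ℂ[T,U₁,U₂]/(T^{n+1}, G₁, G₂)` (with `T = X 0`,
`U₁ = X 1`, `U₂ = X 2`, and `Gᵢ = Uᵢ² - 2αᵢUᵢT + γᵢT²`), if the elements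
`x = a·t + b₁·u₁ + b₂·u₂` and `yᵢ = cᵢ·t + d_{i1}·u₁ + d_{i2}·u₂` (for an
invertible coefficient matrix) satisfy `x^{n+1} = 0` and
`yᵢ² - 2βᵢ·x·yᵢ + δᵢ·x² = 0`, and moreover `a + b₁α₁ + b₂α₂ = 0`,
then `b₁ = 0` or `b₂ = 0`. -/
theorem stmt_3 (n : ℕ) (hn : 2 ≤ n)
    (a b₁ b₂ c₁ c₂ d₁₁ d₁₂ d₂₁ d₂₂ α₁ γ₁ α₂ γ₂ β₁ δ₁ β₂ δ₂ : ℂ)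
    (hA : IsUnit (Matrix.det !![a, b₁, b₂; c₁, d₁₁, d₁₂; c₂, d₂₁, d₂₂]))
    (I : Ideal (MvPolynomial (Fin 3) ℂ))
    (hI : I = Ideal.span
      { (X 0 : MvPolynomial (Fin 3) ℂ) ^ (n + 1),
        X 1 ^ 2 - C (2 * α₁) * X 1 * X 0 + C γ₁ * X 0 ^ 2,
        X 2 ^ 2 - C (2 * α₂) * X 2 * X 0 + C γ₂ * X 0 ^ 2 })
    (x y₁ y₂ : MvPolynomial (Fin 3) ℂ ⧸ I)
    (hx : x = Ideal.Quotient.mk I (C a * X 0 + C b₁ * X 1 + C b₂ * X 2))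
    (hy₁ : y₁ = Ideal.Quotient.mk I (C c₁ * X 0 + C d₁₁ * X 1 + C d₁₂ * X 2))
    (hy₂ : y₂ = Ideal.Quotient.mk I (C c₂ * X 0 + C d₂₁ * X 1 + C d₂₂ * X 2))
    (hxn : x ^ (n + 1) = 0)
    (hf₁ : y₁ ^ 2 - algebraMap ℂ _ (2 * β₁) * x * y₁ + algebraMap ℂ _ δ₁ * x ^ 2 = 0)
    (hf₂ : y₂ ^ 2 - algebraMap ℂ _ (2 * β₂) * x * y₂ + algebraMap ℂ _ δ₂ * x ^ 2 = 0)
    (hsum : a + b₁ * α₁ + b₂ * α₂ = 0) :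
    b₁ = 0 ∨ b₂ = 0 := by
  by_contra hcon
  push_neg at hcon
  obtain ⟨hb₁, hb₂⟩ := hcon
  have ha : a = -(b₁ * α₁) - b₂ * α₂ := by linear_combination hsum
  subst ha
  -- the ideal maps into (X^3) under psiQ2
  have hle : I ≤ Ideal.comap (psiQ2 α₁ γ₁ α₂ γ₂).toRingHom
      (Ideal.span {(Polynomial.X : Polynomial (Q2 (α₁^2-γ₁) (α₂^2-γ₂))) ^ 3}) := by
    rw [hI, Ideal.span_le]
    intro g hg
    simp only [Set.mem_insert_iff, Set.mem_singleton_iff] at hg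
    rcases hg with rfl | rfl | rfl
    · rw [SetLike.mem_coe, Ideal.mem_comap]
      show psiQ2 α₁ γ₁ α₂ γ₂ _ ∈ _
      rw [map_pow, psiQ2_X0, Ideal.mem_span_singleton]
      exact pow_dvd_pow _ (by omega)
    · rw [SetLike.mem_coe, Ideal.mem_comap]
      show psiQ2 α₁ γ₁ α₂ γ₂ _ ∈ _
      rw [psiQ2_G₁]
      exact Ideal.zero_mem _
    · rw [SetLike.mem_coe, Ideal.mem_comap]
      show psiQ2 α₁ γ₁ α₂ γ₂ _ ∈ _
      rw [psiQ2_G₂]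
      exact Ideal.zero_mem _
  have halg : ∀ r : ℂ, algebraMap ℂ (MvPolynomial (Fin 3) ℂ ⧸ I) r
      = Ideal.Quotient.mk I (C r) := fun r => by
    rw [IsScalarTower.algebraMap_apply ℂ (MvPolynomial (Fin 3) ℂ)]
    simp [Ideal.Quotient.algebraMap_eq, MvPolynomial.algebraMap_eq]
  -- memberships
  have hm₁ : ((C c₁ * X 0 + C d₁₁ * X 1 + C d₁₂ * X 2) ^ 2
      - C (2 * β₁) * ((C (-(b₁ * α₁) - b₂ * α₂) * X 0 + C b₁ * X 1 + C b₂ * X 2)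
        * (C c₁ * X 0 + C d₁₁ * X 1 + C d₁₂ * X 2))
      + C δ₁ * (C (-(b₁ * α₁) - b₂ * α₂) * X 0 + C b₁ * X 1 + C b₂ * X 2) ^ 2) ∈ I := by
    rw [← Ideal.Quotient.eq_zero_iff_mem]
    rw [hx, hy₁, halg (2 * β₁), halg δ₁] at hf₁
    simp only [map_add, map_sub, map_mul, map_pow, map_neg] at hf₁ ⊢
    linear_combination hf₁
  have hm₂ : ((C c₂ * X 0 + C d₂₁ * X 1 + C d₂₂ * X 2) ^ 2
      - C (2 * β₂) * ((C (-(b₁ * α₁) - b₂ * α₂) * X 0 + C b₁ * X 1 + C b₂ * X 2)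
        * (C c₂ * X 0 + C d₂₁ * X 1 + C d₂₂ * X 2))
      + C δ₂ * (C (-(b₁ * α₁) - b₂ * α₂) * X 0 + C b₁ * X 1 + C b₂ * X 2) ^ 2) ∈ I := by
    rw [← Ideal.Quotient.eq_zero_iff_mem]
    rw [hx, hy₂, halg (2 * β₂), halg δ₂] at hf₂
    simp only [map_add, map_sub, map_mul, map_pow, map_neg] at hf₂ ⊢
    linear_combination hf₂
  -- key claim: for each i, cᵢ + dᵢ₁α₁ + dᵢ₂α₂ = 0
  have key : ∀ (cc u₁ u₂ ββ δδ : ℂ),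
      ((C cc * X 0 + C u₁ * X 1 + C u₂ * X 2) ^ 2
        - C (2 * ββ) * ((C (-(b₁ * α₁) - b₂ * α₂) * X 0 + C b₁ * X 1 + C b₂ * X 2)
          * (C cc * X 0 + C u₁ * X 1 + C u₂ * X 2))
        + C δδ * (C (-(b₁ * α₁) - b₂ * α₂) * X 0 + C b₁ * X 1 + C b₂ * X 2) ^ 2) ∈ I →
      cc + u₁ * α₁ + u₂ * α₂ = 0 := by
    intro cc u₁ u₂ ββ δδ hm
    obtain ⟨q, hq⟩ := Ideal.mem_span_singleton.mp (Ideal.mem_comap.mp (hle hm))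
    set xB : Q2 (α₁^2-γ₁) (α₂^2-γ₂) :=
      algebraMap ℂ _ (-(b₁ * α₁) - b₂ * α₂) + algebraMap ℂ _ b₁ * ⟨α₁,1,0,0⟩
        + algebraMap ℂ _ b₂ * ⟨α₂,0,1,0⟩ with hxB
    set yB : Q2 (α₁^2-γ₁) (α₂^2-γ₂) :=
      algebraMap ℂ _ cc + algebraMap ℂ _ u₁ * ⟨α₁,1,0,0⟩
        + algebraMap ℂ _ u₂ * ⟨α₂,0,1,0⟩ with hyB
    have hcalc : psiQ2 α₁ γ₁ α₂ γ₂ ((C cc * X 0 + C u₁ * X 1 + C u₂ * X 2) ^ 2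
        - C (2 * ββ) * ((C (-(b₁ * α₁) - b₂ * α₂) * X 0 + C b₁ * X 1 + C b₂ * X 2)
          * (C cc * X 0 + C u₁ * X 1 + C u₂ * X 2))
        + C δδ * (C (-(b₁ * α₁) - b₂ * α₂) * X 0 + C b₁ * X 1 + C b₂ * X 2) ^ 2)
        = Polynomial.C (yB * yB - algebraMap ℂ _ (2*ββ) * (xB * yB)
            + algebraMap ℂ _ δδ * (xB * xB)) * Polynomial.X ^ 2 := by
      rw [hyB, hxB]
      simp only [map_add, map_sub, map_mul, map_pow, psiQ2_X0, psiQ2_X1, psiQ2_X2, psiQ2_C]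
      ring
    have hw : yB * yB - algebraMap ℂ _ (2*ββ) * (xB * yB) + algebraMap ℂ _ δδ * (xB * xB) = 0 :=
      cw_eq_zero _ q (by rw [← hcalc]; exact hq)
    have E0 := congrArg Q2.w hw
    have E1 := congrArg Q2.x hw
    have E2 := congrArg Q2.y hw
    have E3 := congrArg Q2.z hw
    rw [hyB, hxB] at E0 E1 E2 E3
    simp only [Q2.mul_w, Q2.mul_x, Q2.mul_y, Q2.mul_z, Q2.add_w, Q2.add_x, Q2.add_y,
      Q2.add_z, Q2.sub_w, Q2.sub_x, Q2.sub_y, Q2.sub_z, Q2.mk_w, Q2.mk_x, Q2.mk_y, Q2.mk_z,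
      Q2.algebraMap_w, Q2.algebraMap_x, Q2.algebraMap_y, Q2.algebraMap_z,
      Q2.zero_w, Q2.zero_x, Q2.zero_y, Q2.zero_z] at E0 E1 E2 E3
    ring_nf at E0 E1 E2 E3
    by_contra hc
    -- set c' := cc + u₁α₁ + u₂α₂ ≠ 0
    have K1 : (cc + u₁ * α₁ + u₂ * α₂) * (u₁ - ββ * b₁) = 0 := by
      linear_combination E1 / 2
    have K2 : (cc + u₁ * α₁ + u₂ * α₂) * (u₂ - ββ * b₂) = 0 := by
      linear_combination E2 / 2
    have h1 : u₁ = ββ * b₁ := by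
      rcases mul_eq_zero.mp K1 with h | h
      · exact absurd h hc
      · linear_combination h
    have h2 : u₂ = ββ * b₂ := by
      rcases mul_eq_zero.mp K2 with h | h
      · exact absurd h hc
      · linear_combination h
    subst h1
    subst h2
    have K3 : b₁ * b₂ * (δδ - ββ^2) = 0 := by
      linear_combination E3 / 2
    have hδ : δδ = ββ^2 := by
      rcases mul_eq_zero.mp K3 with h | h
      · rcases mul_eq_zero.mp h with h' | h'
        · exact absurd h' hb₁
        · exact absurd h' hb₂
      · linear_combination h
    subst hδ
    have hc2 : (cc + ββ * b₁ * α₁ + ββ * b₂ * α₂) ^ 2 = 0 := by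
      linear_combination E0
    exact hc (pow_eq_zero_iff (two_ne_zero) |>.mp hc2)
  have hc₁ : c₁ + d₁₁ * α₁ + d₁₂ * α₂ = 0 := key c₁ d₁₁ d₁₂ β₁ δ₁ hm₁
  have hc₂ : c₂ + d₂₁ * α₁ + d₂₂ * α₂ = 0 := key c₂ d₂₁ d₂₂ β₂ δ₂ hm₂
  -- determinant vanishes
  apply hA.ne_zero
  rw [Matrix.det_fin_three]
  simp only [Matrix.of_apply, Matrix.cons_val', Matrix.cons_val_zero, Matrix.cons_val_one,
    Matrix.head_cons, Matrix.empty_val', Matrix.cons_val_fin_one, Matrix.head_fin_const,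
    Matrix.cons_val_two, Matrix.tail_cons]
  linear_combination (-(b₁ * d₂₂) + b₂ * d₂₁) * hc₁ + (b₁ * d₁₂ - b₂ * d₁₁) * hc₂
end

section
/- Let w ∈ ℂ, ρ > 0, and let C = {z ∈ ℂ : |z − w| = ρ}. Let A, B ⊆ ℂ be sets such that every sum a + b with a ∈ A and b ∈ B lies on C. If B contains at least two distinct elements, then A contains at most two elements. -/
open Complex

private lemma key_8 (d : ℂ) (hd : d ≠ 0) (K : ℝ) (u₁ u₂ : ℂ)
    (h₁re : (u₁ * (starRingEnd ℂ) d).re = 0) (h₂re : (u₂ * (starRingEnd ℂ) d).re = 0)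
    (h₁ : Complex.normSq u₁ = K) (h₂ : Complex.normSq u₂ = K) :
    u₁ = u₂ ∨ u₁ = -u₂ := by
  set v₁ := u₁ * (starRingEnd ℂ) d with hv₁
  set v₂ := u₂ * (starRingEnd ℂ) d with hv₂
  have hn₁ : Complex.normSq v₁ = K * Complex.normSq d := by
    simp [hv₁, Complex.normSq_mul, h₁]
  have hn₂ : Complex.normSq v₂ = K * Complex.normSq d := by
    simp [hv₂, Complex.normSq_mul, h₂]
  have him : v₁.im ^ 2 = v₂.im ^ 2 := by
    have e₁ : Complex.normSq v₁ = v₁.re ^ 2 + v₁.im ^ 2 := by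
      rw [Complex.normSq_apply]; ring
    have e₂ : Complex.normSq v₂ = v₂.re ^ 2 + v₂.im ^ 2 := by
      rw [Complex.normSq_apply]; ring
    rw [e₁, h₁re] at hn₁
    rw [e₂, h₂re] at hn₂
    nlinarith [hn₁, hn₂]
  have hcd : (starRingEnd ℂ) d ≠ 0 := by
    simpa using hd
  rcases sq_eq_sq_iff_eq_or_eq_neg.mp him with h | h
  · left
    have : v₁ = v₂ := Complex.ext (by rw [h₁re, h₂re]) h
    exact mul_right_cancel₀ hcd this
  · right
    have : v₁ = -v₂ := Complex.ext (by simp [h₁re, h₂re]) (by simpa using h)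
    have : u₁ * (starRingEnd ℂ) d = (-u₂) * (starRingEnd ℂ) d := by
      rw [← hv₁, this, hv₂]; ring
    exact mul_right_cancel₀ hcd this

/-- If every sum `a + b` with `a ∈ A`, `b ∈ B` lies on a fixed circle of
positive radius, and `B` has at least two elements, then `A` has at most
two elements. -/
theorem stmt_8 (w : ℂ) (ρ : ℝ) (hρ : 0 < ρ) (A B : Set ℂ)
    (h : ∀ a ∈ A, ∀ b ∈ B, ‖a + b - w‖ = ρ)
    (hB : ∃ b₁ ∈ B, ∃ b₂ ∈ B, b₁ ≠ b₂) :
    ∀ a₁ ∈ A, ∀ a₂ ∈ A, ∀ a₃ ∈ A, a₁ = a₂ ∨ a₁ = a₃ ∨ a₂ = a₃ := by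
  obtain ⟨b₁, hb₁, b₂, hb₂, hbne⟩ := hB
  set d : ℂ := b₁ - b₂ with hd
  have hdne : d ≠ 0 := sub_ne_zero.mpr hbne
  set m : ℂ := w - (b₁ + b₂) / 2 with hm
  -- for each a ∈ A, the shifted point u = a - m satisfies the two conditions
  have main : ∀ a ∈ A, ((a - m) * (starRingEnd ℂ) d).re = 0 ∧
      Complex.normSq (a - m) = ρ ^ 2 - Complex.normSq d / 4 := by
    intro a ha
    have h1 := h a ha b₁ hb₁
    have h2 := h a ha b₂ hb₂
    have e1 : a + b₁ - w = (a - m) + d / 2 := by rw [hm, hd]; ring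
    have e2 : a + b₂ - w = (a - m) - d / 2 := by rw [hm, hd]; ring
    have n1 : Complex.normSq ((a - m) + d / 2) = ρ ^ 2 := by
      rw [← e1, ← Complex.sq_norm, h1]
    have n2 : Complex.normSq ((a - m) - d / 2) = ρ ^ 2 := by
      rw [← e2, ← Complex.sq_norm, h2]
    set u := a - m with hu
    have ex1 : Complex.normSq (u + d / 2) =
        Complex.normSq u + Complex.normSq d / 4 + (u * (starRingEnd ℂ) d).re := by
      simp only [Complex.normSq_apply, Complex.add_re, Complex.add_im,
        Complex.div_re, Complex.div_im, Complex.mul_re, Complex.mul_im,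
        Complex.conj_re, Complex.conj_im]
      norm_num
      ring
    have ex2 : Complex.normSq (u - d / 2) =
        Complex.normSq u + Complex.normSq d / 4 - (u * (starRingEnd ℂ) d).re := by
      simp only [Complex.normSq_apply, Complex.sub_re, Complex.sub_im,
        Complex.div_re, Complex.div_im, Complex.mul_re, Complex.mul_im,
        Complex.conj_re, Complex.conj_im]
      norm_num
      ring
    constructor
    · nlinarith [n1, n2, ex1, ex2]
    · nlinarith [n1, n2, ex1, ex2]
  intro a₁ ha₁ a₂ ha₂ a₃ ha₃
  obtain ⟨r₁, n₁⟩ := main a₁ ha₁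
  obtain ⟨r₂, n₂⟩ := main a₂ ha₂
  obtain ⟨r₃, n₃⟩ := main a₃ ha₃
  have k12 := key_8 d hdne _ _ _ r₁ r₂ n₁ n₂
  have k13 := key_8 d hdne _ _ _ r₁ r₃ n₁ n₃
  rcases k12 with h12 | h12
  · left; linear_combination h12
  · rcases k13 with h13 | h13
    · right; left; linear_combination h13
    · right; right
      linear_combination h12 - h13
end

section
/- Let n ≥ 1, r ≥ 1 and q₁, …, q_r ≥ 1 be integers. For each 1 ≤ i ≤ r, let Gᵢ ∈ ℂ[T, U₁, …, U_r] be a polynomial of the form Gᵢ = Uᵢ^{qᵢ+1} + Σ_{k=0}^{qᵢ} c_{i,k}·Uᵢ^k·T^{qᵢ+1−k} with c_{i,k} ∈ ℂ. Let R = ℂ[T, U₁, …, U_r]/(T^{n+1}, G₁, …, G_r). Then the images in R of the monomials T^α·U₁^{α₁}⋯U_r^{α_r}, where 0 ≤ α ≤ n and 0 ≤ αᵢ ≤ qᵢ for each i, are linearly independent over ℂ. -/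
open MvPolynomial

/-- Linear independence of scaled basis vectors in a tower. -/
lemma li_smul_basis {R S M : Type*} [CommRing R] [CommRing S] [Nontrivial S] [Algebra R S]
    [AddCommGroup M] [Module R M] [Module S M] [IsScalarTower R S M]
    {ι κ : Type*} [Fintype ι] [Fintype κ]
    {v : ι → S} (hv : LinearIndependent R v) (b : Module.Basis κ S M) :
    LinearIndependent R (fun p : ι × κ => v p.1 • b p.2) := by
  rw [Fintype.linearIndependent_iff]
  intro g hg p
  have h1 : ∑ k : κ, (∑ i : ι, g (i, k) • v i) • b k = 0 := by
    rw [← hg, Fintype.sum_prod_type_right]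
    congr 1
    ext k
    rw [Finset.sum_smul]
    congr 1
    ext i
    rw [smul_assoc]
  have h2 : ∀ k, (∑ i : ι, g (i, k) • v i) = 0 :=
    Fintype.linearIndependent_iff.mp b.linearIndependent _ h1
  exact Fintype.linearIndependent_iff.mp hv (fun i => g (i, p.2)) (h2 p.2) p.1

structure Sol (n r : ℕ) (q : Fin r → ℕ) (c : Fin r → ℕ → ℂ) where
  A : Type
  [cr : CommRing A]
  [alg : Algebra ℂ A]
  [nt : Nontrivial A]
  t : A
  u : Fin r → A
  ht : t ^ (n + 1) = 0
  hu : ∀ i, u i ^ (q i + 1) +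
    ∑ k ∈ Finset.range (q i + 1),
      algebraMap ℂ A (c i k) * u i ^ k * t ^ (q i + 1 - k) = 0
  hind : LinearIndependent ℂ
    (fun m : Fin (n + 1) × ((i : Fin r) → Fin (q i + 1)) =>
      t ^ (m.1 : ℕ) * ∏ i, u i ^ (m.2 i : ℕ))

lemma sol_exists (n : ℕ) : ∀ (r : ℕ) (q : Fin r → ℕ) (c : Fin r → ℕ → ℂ),
    Nonempty (Sol n r q c) := by
  intro r
  induction r with
  | zero =>
    intro q c
    set g : Polynomial ℂ := Polynomial.X ^ (n + 1) with hgdef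
    have hg : g.Monic := Polynomial.monic_X_pow _
    haveI hnt : Nontrivial (AdjoinRoot g) := AdjoinRoot.nontrivial g
      (by rw [hgdef, Polynomial.degree_X_pow]; exact_mod_cast Nat.succ_ne_zero n)
    refine ⟨⟨AdjoinRoot g, AdjoinRoot.root g, Fin.elim0, ?_, fun i => i.elim0, ?_⟩⟩
    · have := AdjoinRoot.eval₂_root g
      simpa [hgdef] using this
    · have hdim : g.natDegree = n + 1 := Polynomial.natDegree_X_pow _
      set b := (AdjoinRoot.powerBasis' hg).basis
      have hb : ∀ i, b i = AdjoinRoot.root g ^ (i : ℕ) := by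
        intro i
        show (AdjoinRoot.powerBasis' hg).basis i = _
        rw [(AdjoinRoot.powerBasis' hg).basis_eq_pow, AdjoinRoot.powerBasis'_gen]
      have hf : Function.Injective
          (fun m : Fin (n + 1) × ((i : Fin 0) → Fin (q i + 1)) =>
            (Fin.cast hdim.symm m.1 : Fin (AdjoinRoot.powerBasis' hg).dim)) := by
        intro m1 m2 h
        ext
        · have h' := congrArg Fin.val h
          exact h'
        · exact (Fin.elim0 ‹Fin 0›)
      have := (b.linearIndependent.comp _ hf)
      convert this using 1
      funext m
      simp only [Function.comp, hb, Fin.coe_cast]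
      simp
      rfl
      rfl
  | succ r ih =>
    intro q c
    obtain ⟨s⟩ := ih (fun i => q i.castSucc) (fun i => c i.castSucc)
    obtain ⟨A, t, u, ht, hu, hind⟩ := s
    set ql := q (Fin.last r) with hql
    set p : Polynomial A := ∑ k ∈ Finset.range (ql + 1),
        Polynomial.C (algebraMap ℂ A (c (Fin.last r) k) * t ^ (ql + 1 - k)) *
          Polynomial.X ^ k with hpdef
    set g : Polynomial A := Polynomial.X ^ (ql + 1) + p with hgdef
    have hpdeg : p.degree < ((ql + 1 : ℕ) : WithBot ℕ) := by
      apply lt_of_le_of_lt (Polynomial.degree_sum_le _ _)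
      rw [Finset.sup_lt_iff (by exact_mod_cast WithBot.bot_lt_coe _)]
      intro k hk
      refine lt_of_le_of_lt (Polynomial.degree_C_mul_X_pow_le k _) ?_
      exact_mod_cast Finset.mem_range.mp hk
    have hg : g.Monic := Polynomial.monic_X_pow_add hpdeg
    have hdim : g.natDegree = ql + 1 := by
      have hdeg : g.degree = ((ql + 1 : ℕ) : WithBot ℕ) := by
        rw [hgdef, Polynomial.degree_add_eq_left_of_degree_lt, Polynomial.degree_X_pow]
        rw [Polynomial.degree_X_pow]; exact hpdeg
      exact Polynomial.natDegree_eq_of_degree_eq_some hdeg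
    haveI hnt' : Nontrivial (AdjoinRoot g) :=
      nontrivial_of_ne _ _ ((AdjoinRoot.powerBasis' hg).basis.ne_zero
        (⟨0, by omega⟩ : Fin g.natDegree))
    have hAM : ∀ z : ℂ, algebraMap ℂ (AdjoinRoot g) z
        = algebraMap A (AdjoinRoot g) (algebraMap ℂ A z) := fun z =>
      IsScalarTower.algebraMap_apply ℂ A (AdjoinRoot g) z
    refine ⟨⟨AdjoinRoot g, algebraMap A (AdjoinRoot g) t,
      Fin.snoc (fun i => algebraMap A (AdjoinRoot g) (u i)) (AdjoinRoot.root g),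
      ?_, ?_, ?_⟩⟩
    · rw [← map_pow, ht, map_zero]
    · intro i
      induction i using Fin.lastCases with
      | last =>
        have h0 := AdjoinRoot.eval₂_root g
        rw [hgdef, hpdef] at h0
        simp only [Polynomial.eval₂_add, Polynomial.eval₂_pow, Polynomial.eval₂_X,
          Polynomial.eval₂_finset_sum, Polynomial.eval₂_mul, Polynomial.eval₂_C,
          map_mul, map_pow, AdjoinRoot.algebraMap_eq] at h0 ⊢
        simp only [Fin.snoc_last, hAM, AdjoinRoot.algebraMap_eq]
        rw [← h0]
        congr 1
        apply Finset.sum_congr rfl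
        intro k _
        ring
      | cast i =>
        have h1 := congrArg (algebraMap A (AdjoinRoot g)) (hu i)
        simp only [map_add, map_pow, map_mul, map_sum, map_zero] at h1
        simpa only [Fin.snoc_castSucc, hAM] using h1
    · have hli := li_smul_basis hind (AdjoinRoot.powerBasis' hg).basis
      set b := (AdjoinRoot.powerBasis' hg).basis with hb
      set e : (Fin (n + 1) × ((i : Fin (r + 1)) → Fin (q i + 1))) →
          (Fin (n + 1) × ((i : Fin r) → Fin (q i.castSucc + 1))) × Fin g.natDegree :=
        fun m => ((m.1, fun i => m.2 i.castSucc), Fin.cast hdim.symm (m.2 (Fin.last r)))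
        with he_def
      have he : Function.Injective e := by
        intro m1 m2 h
        have h1 : m1.1 = m2.1 := congrArg (fun x => x.1.1) h
        have h2 : (fun i : Fin r => m1.2 i.castSucc) = (fun i : Fin r => m2.2 i.castSucc) :=
          congrArg (fun x => x.1.2) h
        have h3 : ((m1.2 (Fin.last r)) : ℕ) = ((m2.2 (Fin.last r)) : ℕ) := by
          have := congrArg (fun x => (x.2 : ℕ)) h
          exact this
        refine Prod.ext h1 (funext fun i => ?_)
        induction i using Fin.lastCases with
        | last => exact Fin.ext h3
        | cast i => exact congrFun h2 i
      have := hli.comp e he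
      convert this using 1
      funext m
      simp only [Function.comp, he_def]
      have hbval : b (Fin.cast hdim.symm (m.2 (Fin.last r)) : Fin g.natDegree)
          = AdjoinRoot.root g ^ ((m.2 (Fin.last r)) : ℕ) := by
        rw [hb]
        exact ((AdjoinRoot.powerBasis' hg).basis_eq_pow _).trans
          (by rw [AdjoinRoot.powerBasis'_gen]; rfl)
      rw [hbval, Algebra.smul_def, map_mul, map_pow, map_prod]
      simp only [map_pow]
      rw [Fin.prod_univ_castSucc]
      simp only [Fin.snoc_castSucc, Fin.snoc_last]
      ring
      rfl
      rfl

/-- In `R = ℂ[T, U₁, …, U_r]/(T^{n+1}, G₁, …, G_r)` (with `T = X 0`,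
`Uᵢ = X i.succ`, and each `Gᵢ = Uᵢ^{qᵢ+1} + Σ_{k≤qᵢ} c_{i,k} Uᵢ^k T^{qᵢ+1-k}`
the homogenization of a monic polynomial of degree `qᵢ+1`), the images of the
monomials `T^α · U₁^{α₁} ⋯ U_r^{α_r}` with `α ≤ n` and `αᵢ ≤ qᵢ` are linearly
independent over `ℂ`. -/
theorem stmt_12 (n r : ℕ) (hn : 1 ≤ n) (hr : 1 ≤ r)
    (q : Fin r → ℕ) (hq : ∀ i, 1 ≤ q i) (c : (i : Fin r) → ℕ → ℂ)
    (G : Fin r → MvPolynomial (Fin (r + 1)) ℂ)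
    (hG : ∀ i, G i = X i.succ ^ (q i + 1) +
      ∑ k ∈ Finset.range (q i + 1), C (c i k) * X i.succ ^ k * X 0 ^ (q i + 1 - k))
    (I : Ideal (MvPolynomial (Fin (r + 1)) ℂ))
    (hI : I = Ideal.span ({(X 0 : MvPolynomial (Fin (r + 1)) ℂ) ^ (n + 1)} ∪
      Set.range G)) :
    LinearIndependent ℂ
      (fun m : {m : ℕ × (Fin r → ℕ) // m.1 ≤ n ∧ ∀ i, m.2 i ≤ q i} =>
        Ideal.Quotient.mk I (X 0 ^ m.1.1 * ∏ i, X i.succ ^ m.1.2 i)) := by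
  obtain ⟨A, t, u, ht, hu, hind⟩ := (sol_exists n r q c).some
  set φ : MvPolynomial (Fin (r + 1)) ℂ →ₐ[ℂ] A := aeval (Fin.cases t u) with hφ
  have hφ0 : φ (X 0) = t := by simp [hφ]
  have hφs : ∀ i : Fin r, φ (X i.succ) = u i := by intro i; simp [hφ]
  have hle : ∀ a ∈ I, φ a = 0 := by
    intro a ha
    rw [hI] at ha
    have hsub : ({(X 0 : MvPolynomial (Fin (r + 1)) ℂ) ^ (n + 1)} ∪ Set.range G : Set _)
        ⊆ ↑(RingHom.ker φ.toRingHom) := by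
      rintro x (rfl | ⟨i, rfl⟩)
      · simp only [SetLike.mem_coe, RingHom.mem_ker, AlgHom.toRingHom_eq_coe,
          RingHom.coe_coe, map_pow, hφ0]
        exact ht
      · simp only [SetLike.mem_coe, RingHom.mem_ker, AlgHom.toRingHom_eq_coe,
          RingHom.coe_coe]
        rw [hG i, map_add, map_pow, map_sum, hφs]
        have hterm : ∀ k ∈ Finset.range (q i + 1),
            φ (C (c i k) * X i.succ ^ k * X 0 ^ (q i + 1 - k))
            = algebraMap ℂ A (c i k) * u i ^ k * t ^ (q i + 1 - k) := by
          intro k _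
          rw [map_mul, map_mul, map_pow, map_pow, hφ0, hφs]
          have : φ (C (c i k)) = algebraMap ℂ A (c i k) := by simp [hφ]
          rw [this]
        rw [Finset.sum_congr rfl hterm]
        exact hu i
    have := Ideal.span_le.mpr hsub ha
    simpa [RingHom.mem_ker] using this
  set ψ := Ideal.Quotient.liftₐ I φ hle with hψ
  set f : {m : ℕ × (Fin r → ℕ) // m.1 ≤ n ∧ ∀ i, m.2 i ≤ q i} →
      Fin (n + 1) × ((i : Fin r) → Fin (q i + 1)) :=
    fun m => (⟨m.1.1, Nat.lt_succ_of_le m.2.1⟩,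
      fun i => ⟨m.1.2 i, Nat.lt_succ_of_le (m.2.2 i)⟩) with hf_def
  have hf : Function.Injective f := by
    intro m1 m2 h
    have h1 : m1.1.1 = m2.1.1 := by
      have := congrArg (fun x => (x.1 : ℕ)) h
      simpa [hf_def] using this
    have h2 : ∀ i, m1.1.2 i = m2.1.2 i := by
      intro i
      have := congrArg (fun x => ((x.2 i : ℕ))) h
      simpa [hf_def] using this
    exact Subtype.ext (Prod.ext h1 (funext h2))
  apply LinearIndependent.of_comp ψ.toLinearMap
  have heq : (⇑ψ.toLinearMap ∘ fun m : {m : ℕ × (Fin r → ℕ) // m.1 ≤ n ∧ ∀ i, m.2 i ≤ q i} =>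
      Ideal.Quotient.mk I (X 0 ^ m.1.1 * ∏ i, X i.succ ^ m.1.2 i))
      = (fun m : Fin (n + 1) × ((i : Fin r) → Fin (q i + 1)) =>
          t ^ (m.1 : ℕ) * ∏ i, u i ^ (m.2 i : ℕ)) ∘ f := by
    funext m
    simp only [Function.comp, AlgHom.toLinearMap_apply, hψ, Ideal.Quotient.liftₐ_apply,
      Ideal.Quotient.lift_mk, hf_def]
    show φ (X 0 ^ m.1.1 * ∏ i, X i.succ ^ m.1.2 i) = _
    simp only [map_mul, map_pow, map_prod, hφ0, hφs]
  rw [heq]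
  exact hind.comp f hf
end
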